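/- Let A := max_l max_{x∈V}(û^l(x) - v̂^l(x)) and B := max_l max_{x∈V}(v̂^l(x) - û^l(x)) for two solutions of the system. If A > 0 and is attained for an index l_0, then A = B > 0, and there exist an index t_0 ≠ l_0 and a vertex y_0 ∈ V such that A = max over {x : u^{l_0}(x) = v^{l_0}(x) = 0} of (û^{l_0}(x) - v̂^{l_0}(x)) = v̂^{t_0}(y_0) - û^{t_0}(y_0). -/
import Mathlib

open Finset

set_option linter.unusedSectionVars false
noncomputable def nbrAvg {V : Type*} [Fintype V] (G : SimpleGraph V) [DecidableRel G.Adj]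
    (u : V → ℝ) (x : V) : ℝ :=
  (∑ y ∈ G.neighborFinset x, u y) / (G.degree x)

def hatFn {V : Type*} {m : ℕ} (u : Fin m → V → ℝ) (l : Fin m) (x : V) : ℝ :=
  u l x - ∑ p ∈ Finset.univ.erase l, u p x

/-- `u` is a (nonnegative) solution of the discrete system with boundary set `Bd`,
nonlinearities `H`, `f`, and boundary data `φ`. -/
def IsSol {V : Type*} {m : ℕ} [Fintype V] (G : SimpleGraph V) [DecidableRel G.Adj]
    (Bd : Set V) (H : V → ℝ → ℝ) (f : Fin m → V → ℝ → ℝ) (φ : Fin m → V → ℝ)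
    (u : Fin m → V → ℝ) : Prop :=
  (∀ l x, 0 ≤ u l x) ∧
  (∀ l x, x ∉ Bd → u l x =
      max (H x (nbrAvg G (u l) x - ∑ p ∈ Finset.univ.erase l, nbrAvg G (u p) x)
           - f l x (u l x)) 0) ∧
  (∀ l x, x ∈ Bd → u l x = φ l x)

section helpers
variable {V : Type*} {m : ℕ} [Fintype V] (G : SimpleGraph V) [DecidableRel G.Adj]

lemma nbrAvg_add (g h : V → ℝ) (x : V) :
    nbrAvg G (fun y => g y + h y) x = nbrAvg G g x + nbrAvg G h x := by
  simp [nbrAvg, Finset.sum_add_distrib, add_div]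

lemma nbrAvg_sub (g h : V → ℝ) (x : V) :
    nbrAvg G (fun y => g y - h y) x = nbrAvg G g x - nbrAvg G h x := by
  simp [nbrAvg, Finset.sum_sub_distrib, sub_div]

lemma nbrAvg_nonpos {g : V → ℝ} (hg : ∀ y, g y ≤ 0) (x : V) :
    nbrAvg G g x ≤ 0 :=
  div_nonpos_iff.mpr (Or.inr ⟨Finset.sum_nonpos fun y _ => hg y, Nat.cast_nonneg _⟩)

lemma nbrAvg_hat (u : Fin m → V → ℝ) (l : Fin m) (x : V) :
    nbrAvg G (hatFn u l) x
      = nbrAvg G (u l) x - ∑ p ∈ Finset.univ.erase l, nbrAvg G (u p) x := by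
  unfold nbrAvg hatFn
  rw [Finset.sum_sub_distrib, sub_div, Finset.sum_comm, ← Finset.sum_div]

lemma avg_eq_of_le (x : V) (hd : 0 < G.degree x) (g : V → ℝ) (M : ℝ)
    (hle : ∀ y, g y ≤ M) (havg : M ≤ nbrAvg G g x) :
    ∀ y, G.Adj x y → g y = M := by
  intro y hy
  by_contra hne
  have hy' : y ∈ G.neighborFinset x := by
    rw [SimpleGraph.mem_neighborFinset]; exact hy
  have hlt : g y < M := lt_of_le_of_ne (hle y) hne
  have hsum : ∑ z ∈ G.neighborFinset x, g z < ∑ z ∈ G.neighborFinset x, M :=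
    Finset.sum_lt_sum (fun z _ => hle z) ⟨y, hy', hlt⟩
  rw [Finset.sum_const, SimpleGraph.card_neighborFinset_eq_degree, nsmul_eq_mul] at hsum
  have hdpos : (0:ℝ) < (G.degree x : ℝ) := by exact_mod_cast hd
  have h2 : nbrAvg G g x < M := by
    rw [nbrAvg, div_lt_iff₀ hdpos]
    linarith
  linarith

lemma deg_pos (hconn : G.Connected) {Bd : Set V} (hBd : Bd.Nonempty) {x : V}
    (hx : x ∉ Bd) : 0 < G.degree x := by
  obtain ⟨b, hb⟩ := hBd
  have hne : x ≠ b := fun h => hx (h ▸ hb)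
  obtain ⟨p⟩ := hconn.preconnected x b
  rw [SimpleGraph.degree_pos_iff_exists_adj]
  cases p with
  | nil => exact absurd rfl hne
  | cons h _ => exact ⟨_, h⟩

lemma walk_prop (P : V → Prop) (hcl : ∀ x, P x → ∀ y, G.Adj x y → P y) :
    ∀ {a b : V} (_ : G.Walk a b), P a → P b := by
  intro a b p
  induction p with
  | nil => exact id
  | cons h _ ih => exact fun ha => ih (hcl _ ha _ h)

lemma hat_pair_nonpos (u : Fin m → V → ℝ) (hnn : ∀ l x, 0 ≤ u l x)
    {l q : Fin m} (h : l ≠ q) (x : V) :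
    hatFn u l x + hatFn u q x ≤ 0 := by
  have h1 : u q x ≤ ∑ p ∈ Finset.univ.erase l, u p x :=
    Finset.single_le_sum (fun p _ => hnn p x)
      (Finset.mem_erase.mpr ⟨h.symm, Finset.mem_univ q⟩)
  have h2 : u l x ≤ ∑ p ∈ Finset.univ.erase q, u p x :=
    Finset.single_le_sum (fun p _ => hnn p x)
      (Finset.mem_erase.mpr ⟨h, Finset.mem_univ l⟩)
  unfold hatFn
  linarith

lemma hat_le (u : Fin m → V → ℝ) (hnn : ∀ l x, 0 ≤ u l x) (l : Fin m) (x : V) :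
    hatFn u l x ≤ u l x := by
  have : 0 ≤ ∑ p ∈ Finset.univ.erase l, u p x :=
    Finset.sum_nonneg fun p _ => hnn p x
  unfold hatFn; linarith

lemma hat_eq_of_pos {u : Fin m → V → ℝ}
    (hdisj : ∀ x (l q : Fin m), l ≠ q → u l x = 0 ∨ u q x = 0)
    {l : Fin m} {x : V} (hpos : 0 < u l x) :
    hatFn u l x = u l x := by
  have h0 : ∑ p ∈ Finset.univ.erase l, u p x = 0 :=
    Finset.sum_eq_zero fun p hp =>
      (hdisj x p l (Finset.ne_of_mem_erase hp)).resolve_right (ne_of_gt hpos)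
  unfold hatFn; rw [h0]; ring

end helpers

section Hf
variable {V : Type*} {m : ℕ} [Fintype V] (G : SimpleGraph V) [DecidableRel G.Adj]
variable {Bd : Set V} {H : V → ℝ → ℝ} {f : Fin m → V → ℝ → ℝ} {φ : Fin m → V → ℝ}


lemma H_sub_le (hHmono : ∀ x : V, Monotone (H x))
    (hHlip : ∀ x s t, |H x s - H x t| ≤ |s - t|) (x : V) (a b : ℝ) :
    H x a - H x b ≤ max (a - b) 0 := by
  rcases le_total a b with hab | hab
  · exact le_max_of_le_right (by linarith [hHmono x hab])
  · refine le_max_of_le_left ?_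
    have h1 := hHlip x a b
    have h2 : H x a - H x b ≤ |H x a - H x b| := le_abs_self _
    rw [abs_of_nonneg (by linarith : (0:ℝ) ≤ a - b)] at h1
    linarith

lemma H_le_self (hH0 : ∀ x, H x 0 = 0)
    (hHlip : ∀ x s t, |H x s - H x t| ≤ |s - t|) {x : V} {s : ℝ} (hs : 0 ≤ s) :
    H x s ≤ s := by
  have h1 := hHlip x s 0
  rw [hH0, sub_zero, sub_zero, abs_of_nonneg hs] at h1
  exact (le_abs_self _).trans h1

lemma H_pos_arg (hHmono : ∀ x : V, Monotone (H x)) (hH0 : ∀ x, H x 0 = 0)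
    {x : V} {s : ℝ} (h : 0 < H x s) : 0 < s := by
  by_contra h'
  push_neg at h'
  have := hHmono x h'
  rw [hH0] at this
  linarith

lemma f_nonneg (hfmono : ∀ l x, Monotone (f l x)) (hf0 : ∀ l x, f l x 0 = 0)
    {l : Fin m} {x : V} {t : ℝ} (ht : 0 ≤ t) : 0 ≤ f l x t := by
  have := hfmono l x ht
  rw [hf0] at this
  exact this

variable {u : Fin m → V → ℝ}

lemma sol_pos_eq (hu : IsSol G Bd H f φ u)
    {l : Fin m} {x : V} (hx : x ∉ Bd) (hpos : 0 < u l x) :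
    u l x = H x (nbrAvg G (hatFn u l) x) - f l x (u l x) := by
  have heq := hu.2.1 l x hx
  rw [← nbrAvg_hat] at heq
  rcases le_or_gt (H x (nbrAvg G (hatFn u l) x) - f l x (u l x)) 0 with h | h
  · rw [max_eq_right h] at heq; linarith
  · rw [max_eq_left h.le] at heq; exact heq

lemma sol_zero_H_le (hu : IsSol G Bd H f φ u)
    (hf0 : ∀ l x, f l x 0 = 0)
    {l : Fin m} {x : V} (hx : x ∉ Bd) (h0 : u l x = 0) :
    H x (nbrAvg G (hatFn u l) x) ≤ 0 := by
  have heq := hu.2.1 l x hx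
  rw [← nbrAvg_hat, h0, hf0] at heq
  by_contra h
  push_neg at h
  rw [sub_zero, max_eq_left h.le] at heq
  linarith

lemma sol_disjoint (hu : IsSol G Bd H f φ u)
    (hHmono : ∀ x : V, Monotone (H x)) (hH0 : ∀ x, H x 0 = 0)
    (hfmono : ∀ l x, Monotone (f l x)) (hf0 : ∀ l x, f l x 0 = 0)
    (hφ : ∀ i j : Fin m, i ≠ j → ∀ x, φ i x * φ j x = 0) :
    ∀ x (l q : Fin m), l ≠ q → u l x = 0 ∨ u q x = 0 := by
  intro x l q hlq
  by_contra hcon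
  push_neg at hcon
  obtain ⟨hl, hq⟩ := hcon
  have hlpos : 0 < u l x := (hu.1 l x).lt_of_ne (Ne.symm hl)
  have hqpos : 0 < u q x := (hu.1 q x).lt_of_ne (Ne.symm hq)
  by_cases hx : x ∈ Bd
  · have hmul := hφ l q hlq x
    rw [← hu.2.2 l x hx, ← hu.2.2 q x hx] at hmul
    rcases mul_eq_zero.mp hmul with h | h
    · exact hl h
    · exact hq h
  · have heql := sol_pos_eq G hu hx hlpos
    have heqq := sol_pos_eq G hu hx hqpos
    have hfl : 0 ≤ f l x (u l x) := f_nonneg hfmono hf0 hlpos.le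
    have hfq : 0 ≤ f q x (u q x) := f_nonneg hfmono hf0 hqpos.le
    have hal : 0 < nbrAvg G (hatFn u l) x :=
      H_pos_arg hHmono hH0 (by linarith : 0 < H x (nbrAvg G (hatFn u l) x))
    have haq : 0 < nbrAvg G (hatFn u q) x :=
      H_pos_arg hHmono hH0 (by linarith : 0 < H x (nbrAvg G (hatFn u q) x))
    have hsum : nbrAvg G (fun y => hatFn u l y + hatFn u q y) x ≤ 0 :=
      nbrAvg_nonpos G (fun y => hat_pair_nonpos u hu.1 hlq y) x
    rw [nbrAvg_add] at hsum
    linarith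

end Hf

section key
variable {V : Type*} {m : ℕ} [Fintype V] (G : SimpleGraph V) [DecidableRel G.Adj]
variable {Bd : Set V} {H : V → ℝ → ℝ} {f : Fin m → V → ℝ → ℝ} {φ : Fin m → V → ℝ}

lemma sol_bd_hat_eq {u v : Fin m → V → ℝ}
    (hu : IsSol G Bd H f φ u) (hv : IsSol G Bd H f φ v)
    (l : Fin m) {x : V} (hx : x ∈ Bd) :
    hatFn u l x - hatFn v l x = 0 := by
  have h : ∀ p : Fin m, u p x = v p x := fun p => by
    rw [hu.2.2 p x hx, hv.2.2 p x hx]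
  unfold hatFn
  rw [h l, Finset.sum_congr rfl fun p _ => h p]
  ring

lemma key_lemma
    (hconn : G.Connected) (hBd : Bd.Nonempty)
    (hHmono : ∀ x : V, Monotone (H x)) (hH0 : ∀ x, H x 0 = 0)
    (hfmono : ∀ l x, Monotone (f l x)) (hf0 : ∀ l x, f l x 0 = 0)
    (hφ : ∀ i j : Fin m, i ≠ j → ∀ x, φ i x * φ j x = 0)
    (hHlip : ∀ x s t, |H x s - H x t| ≤ |s - t|)
    (u v : Fin m → V → ℝ) (hu : IsSol G Bd H f φ u) (hv : IsSol G Bd H f φ v)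
    (A : ℝ)
    (hA : IsGreatest {a : ℝ | ∃ (l : Fin m) (x : V), a = hatFn u l x - hatFn v l x} A)
    (hApos : 0 < A) (l₀ : Fin m)
    (hl₀ : ∃ x : V, hatFn u l₀ x - hatFn v l₀ x = A) :
    ∃ (t₀ : Fin m) (y₀ : V), t₀ ≠ l₀ ∧
      u l₀ y₀ = 0 ∧ v l₀ y₀ = 0 ∧
      hatFn u l₀ y₀ - hatFn v l₀ y₀ = A ∧
      hatFn v t₀ y₀ - hatFn u t₀ y₀ = A := by
  have hunn := hu.1
  have hvnn := hv.1
  have hub : ∀ (l : Fin m) (x : V), hatFn u l x - hatFn v l x ≤ A :=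
    fun l x => hA.2 ⟨l, x, rfl⟩
  have hdu := sol_disjoint G hu hHmono hH0 hfmono hf0 hφ
  have hdv := sol_disjoint G hv hHmono hH0 hfmono hf0 hφ
  by_cases hgood : ∃ y, u l₀ y = 0 ∧ v l₀ y = 0 ∧ hatFn u l₀ y - hatFn v l₀ y = A
  · -- extraction at the degenerate point
    obtain ⟨y₀, hu0, hv0, hwA⟩ := hgood
    set Su := ∑ p ∈ Finset.univ.erase l₀, u p y₀ with hSu_def
    set Sv := ∑ p ∈ Finset.univ.erase l₀, v p y₀ with hSv_def
    have hhatu : hatFn u l₀ y₀ = -Su := by unfold hatFn; rw [hu0]; ring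
    have hhatv : hatFn v l₀ y₀ = -Sv := by unfold hatFn; rw [hv0]; ring
    have hA' : Sv - Su = A := by rw [← hwA, hhatu, hhatv]; ring
    have hSunn : 0 ≤ Su := Finset.sum_nonneg fun p _ => hunn p y₀
    have hSvpos : 0 < Sv := by linarith
    obtain ⟨q, hq, hqpos⟩ : ∃ q ∈ Finset.univ.erase l₀, 0 < v q y₀ := by
      by_contra hcon
      push_neg at hcon
      have : Sv = 0 := Finset.sum_eq_zero fun p hp =>
        le_antisymm (hcon p hp) (hvnn p y₀)
      linarith
    have hql : q ≠ l₀ := Finset.ne_of_mem_erase hq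
    have hSv : Sv = v q y₀ :=
      Finset.sum_eq_single_of_mem q hq fun p _ hpq =>
        (hdv y₀ p q hpq).resolve_right (ne_of_gt hqpos)
    have hup : ∀ p, p ≠ q → u p y₀ = 0 := by
      intro p hpq
      rcases eq_or_ne p l₀ with rfl | hpl
      · exact hu0
      by_contra hne
      have hppos : 0 < u p y₀ := (hunn p y₀).lt_of_ne (Ne.symm hne)
      have h1 : hatFn u p y₀ = u p y₀ := hat_eq_of_pos hdu hppos
      have h3 : v p y₀ = 0 := (hdv y₀ p q hpq).resolve_right (ne_of_gt hqpos)
      have h2 : hatFn v p y₀ ≤ v p y₀ - v q y₀ := by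
        have hmem : q ∈ Finset.univ.erase p :=
          Finset.mem_erase.mpr ⟨hpq.symm, Finset.mem_univ q⟩
        have : v q y₀ ≤ ∑ r ∈ Finset.univ.erase p, v r y₀ :=
          Finset.single_le_sum (fun r _ => hvnn r y₀) hmem
        unfold hatFn; linarith
      have h4 : u p y₀ ≤ Su :=
        Finset.single_le_sum (fun r _ => hunn r y₀)
          (Finset.mem_erase.mpr ⟨hpl, Finset.mem_univ p⟩)
      have h5 := hub p y₀
      rw [h1] at h5
      have : Sv ≤ v q y₀ := le_of_eq hSv
      linarith
    have hSu : Su = u q y₀ := by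
      rcases eq_or_ne q l₀ with rfl | _
      · exact absurd rfl hql
      · exact Finset.sum_eq_single_of_mem q hq fun p _ hpq => hup p hpq
    have hhatuq : hatFn u q y₀ = u q y₀ := by
      have h0 : ∑ p ∈ Finset.univ.erase q, u p y₀ = 0 :=
        Finset.sum_eq_zero fun p hp => hup p (Finset.ne_of_mem_erase hp)
      unfold hatFn; rw [h0]; ring
    have hhatvq : hatFn v q y₀ = v q y₀ := hat_eq_of_pos hdv hqpos
    exact ⟨q, y₀, hql, hu0, hv0, hwA, by rw [hhatvq, hhatuq, ← hSv, ← hSu]; linarith⟩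
  · -- no degenerate point: propagation and contradiction
    exfalso
    have step : ∀ x, hatFn u l₀ x - hatFn v l₀ x = A →
        ∀ y, G.Adj x y → hatFn u l₀ y - hatFn v l₀ y = A := by
      intro x hxA y hxy
      have hxBd : x ∉ Bd := fun hx => by
        rw [sol_bd_hat_eq G hu hv l₀ hx] at hxA; linarith
      have hdx : 0 < G.degree x := deg_pos G hconn hBd hxBd
      rcases eq_or_lt_of_le (hunn l₀ x) with h0 | hupos
      · -- u l₀ x = 0
        rcases eq_or_lt_of_le (hvnn l₀ x) with g0 | gpos
        · exact absurd ⟨x, h0.symm, g0.symm, hxA⟩ hgood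
        · have h1 : hatFn u l₀ x ≤ u l₀ x := hat_le u hunn l₀ x
          have h2 : hatFn v l₀ x = v l₀ x := hat_eq_of_pos hdv gpos
          rw [← h0] at h1
          linarith
      · -- u l₀ x > 0
        have hueq := sol_pos_eq G hu hxBd hupos
        have hau : hatFn u l₀ x = u l₀ x := hat_eq_of_pos hdu hupos
        have hfl : 0 ≤ f l₀ x (u l₀ x) := f_nonneg hfmono hf0 hupos.le
        rcases eq_or_lt_of_le (hvnn l₀ x) with g0 | gpos
        · -- v l₀ x = 0
          have hHav : H x (nbrAvg G (hatFn v l₀) x) ≤ 0 :=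
            sol_zero_H_le G hv hf0 hxBd g0.symm
          set c := ∑ p ∈ Finset.univ.erase l₀, v p x with hc_def
          have hcnn : 0 ≤ c := Finset.sum_nonneg fun p _ => hvnn p x
          have hhatv : hatFn v l₀ x = -c := by unfold hatFn; rw [← g0]; ring
          rcases eq_or_lt_of_le hcnn with c0 | cpos
          · -- c = 0
            have hW : A = u l₀ x := by rw [← hxA, hau, hhatv, ← c0]; ring
            have h1 : A ≤ H x (nbrAvg G (hatFn u l₀) x) := by linarith
            have h2 : A ≤ H x (nbrAvg G (hatFn u l₀) x)
                - H x (nbrAvg G (hatFn v l₀) x) := by linarith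
            have h3 := H_sub_le hHmono hHlip x
              (nbrAvg G (hatFn u l₀) x) (nbrAvg G (hatFn v l₀) x)
            have h4 : A ≤ nbrAvg G (hatFn u l₀) x - nbrAvg G (hatFn v l₀) x := by
              rcases le_max_iff.mp (h2.trans h3) with h | h
              · exact h
              · linarith
            have h5 : A ≤ nbrAvg G (fun z => hatFn u l₀ z - hatFn v l₀ z) x := by
              rw [nbrAvg_sub]; exact h4
            exact avg_eq_of_le G x hdx _ A (fun z => hub l₀ z) h5 y hxy
          · -- c > 0
            obtain ⟨q, hq, hqpos⟩ : ∃ q ∈ Finset.univ.erase l₀, 0 < v q x := by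
              by_contra hcon
              push_neg at hcon
              have : c = 0 := Finset.sum_eq_zero fun p hp =>
                le_antisymm (hcon p hp) (hvnn p x)
              linarith
            have hql : q ≠ l₀ := Finset.ne_of_mem_erase hq
            have hcq : c = v q x :=
              Finset.sum_eq_single_of_mem q hq fun p _ hpq =>
                (hdv x p q hpq).resolve_right (ne_of_gt hqpos)
            have hveq := sol_pos_eq G hv hxBd hqpos
            have hfq : 0 ≤ f q x (v q x) := f_nonneg hfmono hf0 hqpos.le
            have h1 : u l₀ x ≤ H x (nbrAvg G (hatFn u l₀) x) := by linarith
            have hau_pos : 0 < nbrAvg G (hatFn u l₀) x :=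
              H_pos_arg hHmono hH0 (by linarith)
            have h1' : u l₀ x ≤ nbrAvg G (hatFn u l₀) x :=
              h1.trans (H_le_self hH0 hHlip hau_pos.le)
            have h2 : v q x ≤ H x (nbrAvg G (hatFn v q) x) := by linarith
            have hav_pos : 0 < nbrAvg G (hatFn v q) x :=
              H_pos_arg hHmono hH0 (by linarith)
            have h2' : v q x ≤ nbrAvg G (hatFn v q) x :=
              h2.trans (H_le_self hH0 hHlip hav_pos.le)
            have hW : A = u l₀ x + v q x := by rw [← hxA, hau, hhatv, hcq]; ring
            have havg : A ≤ nbrAvg G (fun z => hatFn u l₀ z + hatFn v q z) x := by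
              rw [nbrAvg_add]; linarith
            have hgle : ∀ z, hatFn u l₀ z + hatFn v q z ≤ A := by
              intro z
              have hp := hat_pair_nonpos v hvnn hql z
              have := hub l₀ z
              linarith
            have heq := avg_eq_of_le G x hdx _ A hgle havg y hxy
            have hp := hat_pair_nonpos v hvnn hql y
            have := hub l₀ y
            linarith
        · -- v l₀ x > 0
          have hveq := sol_pos_eq G hv hxBd gpos
          have hav : hatFn v l₀ x = v l₀ x := hat_eq_of_pos hdv gpos
          have hW : A = u l₀ x - v l₀ x := by rw [← hxA, hau, hav]
          have hf : f l₀ x (v l₀ x) ≤ f l₀ x (u l₀ x) := hfmono l₀ x (by linarith)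
          have h2 : A ≤ H x (nbrAvg G (hatFn u l₀) x)
              - H x (nbrAvg G (hatFn v l₀) x) := by linarith
          have h3 := H_sub_le hHmono hHlip x
            (nbrAvg G (hatFn u l₀) x) (nbrAvg G (hatFn v l₀) x)
          have h4 : A ≤ nbrAvg G (hatFn u l₀) x - nbrAvg G (hatFn v l₀) x := by
            rcases le_max_iff.mp (h2.trans h3) with h | h
            · exact h
            · linarith
          have h5 : A ≤ nbrAvg G (fun z => hatFn u l₀ z - hatFn v l₀ z) x := by
            rw [nbrAvg_sub]; exact h4
          exact avg_eq_of_le G x hdx _ A (fun z => hub l₀ z) h5 y hxy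
    obtain ⟨x₀, hx₀⟩ := hl₀
    obtain ⟨b, hb⟩ := hBd
    obtain ⟨p⟩ := hconn.preconnected x₀ b
    have hball : hatFn u l₀ b - hatFn v l₀ b = A :=
      walk_prop G (fun x => hatFn u l₀ x - hatFn v l₀ x = A) step p hx₀
    rw [sol_bd_hat_eq G hu hv l₀ hb] at hball
    linarith

end key

theorem A_eq_B_and_attained {V : Type*} {m : ℕ} [Fintype V] (G : SimpleGraph V) [DecidableRel G.Adj]
    (Bd : Set V) (H : V → ℝ → ℝ) (f : Fin m → V → ℝ → ℝ) (φ : Fin m → V → ℝ)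
    (hconn : G.Connected) (hBd : Bd.Nonempty)
    (hHmono : ∀ x : V, Monotone (H x)) (hH0 : ∀ x, H x 0 = 0)
    (hHodd : ∀ x s, H x (-s) = -H x s)
    (hfmono : ∀ l x, Monotone (f l x)) (hf0 : ∀ l x, f l x 0 = 0)
    (hfodd : ∀ l x s, f l x (-s) = -f l x s)
    (hφ : ∀ i j : Fin m, i ≠ j → ∀ x, φ i x * φ j x = 0)
    (hφnn : ∀ l x, 0 ≤ φ l x)
    (hHlip : ∀ x s t, |H x s - H x t| ≤ |s - t|)
    (u v : Fin m → V → ℝ) (hu : IsSol G Bd H f φ u) (hv : IsSol G Bd H f φ v)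
    (A B : ℝ)
    (hA : IsGreatest {a : ℝ | ∃ (l : Fin m) (x : V), a = hatFn u l x - hatFn v l x} A)
    (hB : IsGreatest {b : ℝ | ∃ (l : Fin m) (x : V), b = hatFn v l x - hatFn u l x} B)
    (hApos : 0 < A) (l₀ : Fin m)
    (hl₀ : ∃ x : V, hatFn u l₀ x - hatFn v l₀ x = A) :
    A = B ∧ ∃ (t₀ : Fin m) (y₀ : V), t₀ ≠ l₀ ∧
      u l₀ y₀ = 0 ∧ v l₀ y₀ = 0 ∧
      hatFn u l₀ y₀ - hatFn v l₀ y₀ = A ∧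
      hatFn v t₀ y₀ - hatFn u t₀ y₀ = A := by
  obtain ⟨t₀, y₀, ht₀, hu0, hv0, hwA, hvt⟩ :=
    key_lemma G hconn hBd hHmono hH0 hfmono hf0 hφ hHlip u v hu hv A hA hApos l₀ hl₀
  have hAB : A ≤ B := hB.2 ⟨t₀, y₀, hvt.symm⟩
  have hBpos : 0 < B := lt_of_lt_of_le hApos hAB
  obtain ⟨l₁, x₁, hx₁⟩ := hB.1
  obtain ⟨s, z, _, _, _, _, hvs⟩ :=
    key_lemma G hconn hBd hHmono hH0 hfmono hf0 hφ hHlip v u hv hu B hB hBpos l₁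
      ⟨x₁, hx₁.symm⟩
  have hBA : B ≤ A := hA.2 ⟨s, z, hvs.symm⟩
  exact ⟨le_antisymm hAB hBA, t₀, y₀, ht₀, hu0, hv0, hwA, hvt⟩
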